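/- For every p ∈ (-∞,-1], the cubic u₂(x,p) = 2(p+3)x³ + 8px² + 2p(3p+1)x + 3(p+1)² is decreasing in p on (-∞,-1) for each fixed x ∈ (0,1), and satisfies u₂(x,p) > u₂(x,-1) = 4x(x-1)² > 0 for p < -1. -/
import Mathlib


noncomputable def u2 (x p : ℝ) : ℝ := 2*(p+3)*x^3 + 8*p*x^2 + 2*p*(3*p+1)*x + 3*(p+1)^2

theorem stmt4 (x : ℝ) (hx : x ∈ Set.Ioo (0:ℝ) 1) :
    StrictAntiOn (fun p => u2 x p) (Set.Iio (-1:ℝ)) ∧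
    u2 x (-1) = 4*x*(x-1)^2 ∧ 0 < 4*x*(x-1)^2 ∧
    ∀ p < (-1:ℝ), u2 x p > u2 x (-1) := by
  obtain ⟨hx0, hx1⟩ := hx
  refine ⟨?_, by unfold u2; ring, by nlinarith [mul_pos hx0 (mul_pos (sub_pos.2 hx1) (sub_pos.2 hx1))], ?_⟩
  · intro p hp q hq hpq
    simp only [Set.mem_Iio] at hp hq
    simp only [u2]
    nlinarith [mul_pos (sub_pos.2 hpq) (mul_pos hx0 (sub_pos.2 hx1)),
      mul_pos hx0 (sub_pos.2 hx1), sq_nonneg (p+q)]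
  · intro p hp
    simp only [u2, gt_iff_lt]
    nlinarith [mul_pos (neg_pos.2 (by linarith : p + 1 < 0)) (mul_pos hx0 (sub_pos.2 hx1)),
      sq_nonneg (p+1), mul_pos hx0 (sub_pos.2 hx1)]
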